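/- arXiv:1211.4733 — 2 statements merged into one kernel-verified Lean document; each statement's English description precedes it below -/
import Mathlib

section
/- If n is an odd perfect number with exactly 12 distinct prime factors, then the smallest prime factor of n is at most 13. -/
/-!
Since `σ(p^e)/p^e < p/(p-1)`, a perfect number satisfies `2 ≤ ∏_{p ∣ n} p/(p-1)`. As `x/(x-1)`
decreases, twelve distinct odd primes all above 13 make this product at most
`∏_{i<12} (15+2i)/(14+2i) ≈ 1.67`, a contradiction.
-/
open Finset

lemma div_sub_one_le_div_sub_one {K : Type*} [Field K] [LinearOrder K] [IsStrictOrderedRing K]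
    {a b : K} (ha : 1 < a) (hab : a ≤ b) : b / (b - 1) ≤ a / (a - 1) := by
  rw [div_le_div_iff₀ (by linarith) (by linarith)]
  linarith

lemma geom_sum_div_pow_le {K : Type*} [Field K] [LinearOrder K] [IsStrictOrderedRing K]
    {x : K} (hx : 1 < x) (e : ℕ) : (∑ k ∈ range (e + 1), x ^ k) / x ^ e ≤ x / (x - 1) := by
  have hxe : 0 < x ^ e := pow_pos (by linarith) e
  rw [div_le_div_iff₀ hxe (by linarith), geom_sum_mul, pow_succ']
  linarith

lemma sum_divisors_div_le_prod_primeFactors (n : ℕ) :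
    ((∑ d ∈ n.divisors, d : ℕ) : ℚ) / n ≤ ∏ p ∈ n.primeFactors, (p : ℚ) / (p - 1) := by
  rcases eq_or_ne n 0 with rfl | hn
  · simp
  calc ((∑ d ∈ n.divisors, d : ℕ) : ℚ) / n
      = ∏ p ∈ n.primeFactors,
          (∑ k ∈ range (n.factorization p + 1), (p : ℚ) ^ k) / (p : ℚ) ^ n.factorization p := by
        rw [prod_div_distrib, Nat.sum_divisors hn]
        push_cast
        congr 1
        exact_mod_cast Nat.prod_primeFactors_pow_factorization hn
    _ ≤ ∏ p ∈ n.primeFactors, (p : ℚ) / (p - 1) := by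
        refine prod_le_prod (fun p hp => ?_) (fun p hp => ?_)
        · positivity
        · exact geom_sum_div_pow_le
            (by exact_mod_cast (Nat.prime_of_mem_primeFactors hp).one_lt) _

lemma Nat.Perfect.two_le_prod_primeFactors {n : ℕ} (hn : n.Perfect) :
    2 ≤ ∏ p ∈ n.primeFactors, (p : ℚ) / (p - 1) := by
  have hσ := (Nat.perfect_iff_sum_divisors_eq_two_mul hn.2).mp hn
  have hn0 : (n : ℚ) ≠ 0 := by exact_mod_cast hn.2.ne'
  calc (2 : ℚ) = ((∑ d ∈ n.divisors, d : ℕ) : ℚ) / n := by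
        rw [hσ]; push_cast; field_simp
    _ ≤ _ := sum_divisors_div_le_prod_primeFactors n

lemma prod_div_sub_one_le_of_odd (S : Finset ℕ) {m : ℕ} (hm : 2 ≤ m)
    (hS : ∀ p ∈ S, Odd p ∧ m ≤ p) :
    ∏ p ∈ S, (p : ℚ) / (p - 1) ≤ ∏ i ∈ range S.card, ((m + 2 * i : ℕ) : ℚ) / ((m + 2 * i : ℕ) - 1) := by
  induction S using Finset.induction_on_min generalizing m with
  | empty => simp
  | insert a S ha ih =>
    obtain ⟨haodd, hma⟩ := hS a (mem_insert_self a S)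
    have hS' : ∀ p ∈ S, Odd p ∧ m + 2 ≤ p := fun p hp => by
      obtain ⟨hpodd, -⟩ := hS p (mem_insert_of_mem hp)
      have := ha p hp
      obtain ⟨x, rfl⟩ := haodd
      obtain ⟨y, rfl⟩ := hpodd
      exact ⟨⟨y, rfl⟩, by omega⟩
    have hm' : (1 : ℚ) < m := by exact_mod_cast hm
    have hma' : (m : ℚ) ≤ a := by exact_mod_cast hma
    rw [prod_insert fun haS => (ha a haS).false, card_insert_of_notMem fun haS => (ha a haS).false,
      prod_range_succ']
    refine (mul_le_mul ?_ ?_ ?_ ?_).trans_eq (mul_comm _ _)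
    · simpa using div_sub_one_le_div_sub_one hm' hma'
    · simpa only [add_assoc, mul_add, mul_one, add_comm 2] using ih (by omega) hS'
    · refine prod_nonneg fun p hp => div_nonneg (by positivity) ?_
      have : (3 : ℚ) ≤ p := by exact_mod_cast (by have := hS' p hp; omega : 3 ≤ p)
      linarith
    · simpa using div_nonneg (by linarith : (0 : ℚ) ≤ m) (by linarith)

lemma prod_range_twelve_lt_two :
    ∏ i ∈ range 12, ((15 + 2 * i : ℕ) : ℚ) / ((15 + 2 * i : ℕ) - 1) < 2 := by
  norm_num [prod_range_succ]

/-- If `n` is an odd perfect number with exactly 12 distinct prime factors, then the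
smallest prime factor of `n` is at most 13. -/
theorem opn_twelve_factors_minFac_le (n : ℕ) (hn : Nat.Perfect n) (hodd : Odd n)
    (hω : n.primeFactors.card = 12) : n.minFac ≤ 13 := by
  by_contra! hmin
  have hfactors : ∀ p ∈ n.primeFactors, Odd p ∧ 15 ≤ p := fun p hp => by
    have hpodd : Odd p := hodd.of_dvd_nat (Nat.dvd_of_mem_primeFactors hp)
    have := Nat.minFac_le_of_dvd (Nat.prime_of_mem_primeFactors hp).two_le
      (Nat.dvd_of_mem_primeFactors hp)
    obtain ⟨x, rfl⟩ := hpodd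
    exact ⟨⟨x, rfl⟩, by omega⟩
  have := prod_div_sub_one_le_of_odd n.primeFactors (by norm_num) hfactors
  rw [hω] at this
  linarith [hn.two_le_prod_primeFactors, prod_range_twelve_lt_two]
end

section
/- If n is an odd perfect number with exactly 20 distinct prime factors, then the smallest prime factor of n is at most 17, the second smallest prime factor is at most 61, and the third smallest prime factor is at most 1301. -/
/-! For `n > 1`, `σ(n) / n = ∏_{p ^ a ∥ n} (1 + p⁻¹ + ⋯ + p⁻ᵃ) < ∏_{p ∣ n} p / (p - 1)`, so a
perfect `n` has `∏_{p ∣ n} p / (p - 1) > 2`. The factor `p / (p - 1)` decreases in `p`, so if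
the prime factors of an odd `n` are `p₀ < p₁ < ⋯ < p₁₉` and `b ≤ p_k`, the product is at most
`∏_{i < k} (3 + 2i) / (2 + 2i) · ∏_{i < 20 - k} (b + 2i) / (b + 2i - 1)`. For
`(k, b) = (0, 18), (1, 62), (2, 1302)` this is at most `2`. -/

open Finset

noncomputable def eulerRatio (x : ℕ) : ℚ := x / (x - 1)

-- `oddEulerRatioProd b k = ∏_{i < k} eulerRatio (b + 2 * i)`
noncomputable def oddEulerRatioProd : ℕ → ℕ → ℚ
  | _, 0 => 1
  | b, k + 1 => eulerRatio b * oddEulerRatioProd (b + 2) k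

lemma eulerRatio_pos {x : ℕ} (hx : 2 ≤ x) : 0 < eulerRatio x := by
  have : (2 : ℚ) ≤ x := by exact_mod_cast hx
  unfold eulerRatio
  exact div_pos (by linarith) (by linarith)

lemma eulerRatio_le_of_le {a b : ℕ} (ha : 2 ≤ a) (hab : a ≤ b) : eulerRatio b ≤ eulerRatio a := by
  have ha' : (2 : ℚ) ≤ a := by exact_mod_cast ha
  have hab' : (a : ℚ) ≤ b := by exact_mod_cast hab
  unfold eulerRatio
  rw [div_le_div_iff₀ (by linarith) (by linarith)]
  linarith

lemma oddEulerRatioProd_nonneg {b : ℕ} (hb : 2 ≤ b) (k : ℕ) : 0 ≤ oddEulerRatioProd b k := by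
  induction k generalizing b with
  | zero => exact zero_le_one
  | succ k ih => exact mul_nonneg (eulerRatio_pos hb).le (ih (by omega))

lemma prod_eulerRatio_nonneg {l : List ℕ} (hl : ∀ x ∈ l, 2 ≤ x) :
    0 ≤ (l.map eulerRatio).prod :=
  List.prod_nonneg fun _ hy ↦ by
    obtain ⟨x, hx, rfl⟩ := List.mem_map.mp hy
    exact (eulerRatio_pos (hl x hx)).le

-- The `i`-th element of `l` is at least `b + 2 * i`, and `eulerRatio` is antitone.
lemma prod_eulerRatio_le_oddEulerRatioProd {l : List ℕ} (hl : l.Pairwise (· < ·))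
    (hodd : ∀ x ∈ l, Odd x) {b : ℕ} (hb : 2 ≤ b) (hbl : ∀ x ∈ l, b ≤ x) :
    (l.map eulerRatio).prod ≤ oddEulerRatioProd b l.length := by
  induction l generalizing b with
  | nil => simp [oddEulerRatioProd]
  | cons x l ih =>
    obtain ⟨hxl, hl⟩ := List.pairwise_cons.mp hl
    have hbx := hbl x List.mem_cons_self
    have hb2 : ∀ y ∈ l, b + 2 ≤ y := fun y hy ↦ by
      obtain ⟨i, hi⟩ := hodd x List.mem_cons_self
      obtain ⟨j, hj⟩ := hodd y (List.mem_cons_of_mem x hy)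
      have := hxl y hy
      omega
    rw [List.map_cons, List.prod_cons, List.length_cons, oddEulerRatioProd]
    exact mul_le_mul (eulerRatio_le_of_le hb hbx)
      (ih hl (fun y hy ↦ hodd y (List.mem_cons_of_mem x hy)) (by omega) hb2)
      (prod_eulerRatio_nonneg fun y hy ↦ by have := hb2 y hy; omega) (eulerRatio_pos hb).le

lemma prod_eulerRatio_le_of_le_getElem {l : List ℕ} (hl : l.Pairwise (· < ·))
    (hodd : ∀ x ∈ l, Odd x) (h3 : ∀ x ∈ l, 3 ≤ x) {k b : ℕ} (hk : k < l.length) (hb : 2 ≤ b)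
    (hbk : b ≤ l[k]) :
    (l.map eulerRatio).prod ≤ oddEulerRatioProd 3 k * oddEulerRatioProd b (l.length - k) := by
  have htake := List.take_sublist k l
  have hdrop := List.drop_sublist k l
  have hdrop_ge : ∀ x ∈ l.drop k, b ≤ x := by
    have hsorted := hl.sublist hdrop
    rw [List.drop_eq_getElem_cons hk] at hsorted ⊢
    rintro x (_ | ⟨_, hx⟩)
    · exact hbk
    · exact hbk.trans (List.rel_of_pairwise_cons hsorted hx).le
  have hbound_take := prod_eulerRatio_le_oddEulerRatioProd (hl.sublist htake)
    (fun x hx ↦ hodd x (htake.subset hx)) (by norm_num) (fun x hx ↦ h3 x (htake.subset hx))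
  have hbound_drop := prod_eulerRatio_le_oddEulerRatioProd (hl.sublist hdrop)
    (fun x hx ↦ hodd x (hdrop.subset hx)) hb hdrop_ge
  rw [List.length_take_of_le hk.le] at hbound_take
  rw [List.length_drop] at hbound_drop
  calc (l.map eulerRatio).prod
      = ((l.take k).map eulerRatio).prod * ((l.drop k).map eulerRatio).prod := by
        rw [← List.prod_append, ← List.map_append, List.take_append_drop]
    _ ≤ _ := mul_le_mul hbound_take hbound_drop
      (prod_eulerRatio_nonneg fun x hx ↦ by have := hdrop_ge x hx; omega)
      (oddEulerRatioProd_nonneg (by norm_num) k)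

lemma geom_sum_div_pow_lt {K : Type*} [Field K] [LinearOrder K] [IsStrictOrderedRing K] {x : K}
    (hx : 1 < x) (a : ℕ) : (∑ i ∈ range (a + 1), x ^ i) / x ^ a < x / (x - 1) := by
  have hx0 : 0 < x - 1 := sub_pos.mpr hx
  rw [geom_sum_eq hx.ne', div_div, div_lt_div_iff₀ (by positivity) hx0]
  nlinarith [pow_pos (zero_lt_one.trans hx) a, pow_succ x a]

lemma Nat.abundancyIndex_lt_prod_eulerRatio {n : ℕ} (hn : 1 < n) :
    n.abundancyIndex < ∏ p ∈ n.primeFactors, eulerRatio p := by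
  have hn0 : n ≠ 0 := by omega
  have hfactor : n.abundancyIndex =
      ∏ p ∈ n.primeFactors, (∑ i ∈ range (n.factorization p + 1), (p : ℚ) ^ i) /
        (p : ℚ) ^ n.factorization p := by
    have hn_eq : (n : ℚ) = ∏ p ∈ n.primeFactors, (p : ℚ) ^ n.factorization p := by
      exact_mod_cast Nat.prod_primeFactors_pow_factorization hn0
    rw [Nat.abundancyIndex, Nat.sum_divisors hn0, hn_eq, prod_div_distrib]
    push_cast
    rfl
  rw [hfactor]
  refine prod_lt_prod_of_nonempty (fun p hp ↦ ?_) (fun p hp ↦ ?_)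
    (Nat.nonempty_primeFactors.mpr hn)
  · have := (Nat.prime_of_mem_primeFactors hp).pos
    positivity
  · exact geom_sum_div_pow_lt (by exact_mod_cast (Nat.prime_of_mem_primeFactors hp).one_lt) _

lemma Nat.Perfect.abundancyIndex_eq_two {n : ℕ} (hn : n.Perfect) : n.abundancyIndex = 2 := by
  rw [Nat.abundancyIndex, (Nat.perfect_iff_sum_divisors_eq_two_mul hn.2).mp hn, Nat.cast_mul,
    Nat.cast_two, mul_div_cancel_right₀ _ (by exact_mod_cast hn.2.ne')]

lemma Nat.Perfect.one_lt {n : ℕ} (hn : n.Perfect) : 1 < n := by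
  obtain ⟨hsum, hpos⟩ := hn
  by_contra! h
  obtain rfl : n = 1 := by omega
  simp at hsum

lemma Nat.Perfect.two_lt_prod_eulerRatio {n : ℕ} (hn : n.Perfect) :
    2 < ∏ p ∈ n.primeFactors, eulerRatio p :=
  hn.abundancyIndex_eq_two ▸ Nat.abundancyIndex_lt_prod_eulerRatio hn.one_lt

lemma Nat.Perfect.sort_primeFactors_lt_of_oddEulerRatioProd_le {n : ℕ} (hn : n.Perfect)
    (hodd : Odd n) {k b : ℕ} (hk : k < n.primeFactors.card) (hb : 2 ≤ b)
    (hbound : oddEulerRatioProd 3 k * oddEulerRatioProd b (n.primeFactors.card - k) ≤ 2) :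
    (Finset.sort n.primeFactors (· ≤ ·))[k]! < b := by
  set l := Finset.sort n.primeFactors (· ≤ ·)
  have hlen : l.length = n.primeFactors.card := Finset.length_sort _
  have hmem : ∀ p ∈ l, p ∈ n.primeFactors := fun p hp ↦ (Finset.mem_sort _).mp hp
  have hodd_l : ∀ p ∈ l, Odd p := fun p hp ↦
    hodd.of_dvd_nat (Nat.dvd_of_mem_primeFactors (hmem p hp))
  have h3 : ∀ p ∈ l, 3 ≤ p := fun p hp ↦ by
    have := (Nat.prime_of_mem_primeFactors (hmem p hp)).two_le
    obtain ⟨i, hi⟩ := hodd_l p hp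
    omega
  have hprod : (l.map eulerRatio).prod = ∏ p ∈ n.primeFactors, eulerRatio p := by
    rw [← Finset.prod_map_toList]
    exact ((Finset.sort_perm_toList _ _).map _).prod_eq
  rw [getElem!_pos l k (hlen ▸ hk)]
  by_contra! hbk
  have := prod_eulerRatio_le_of_le_getElem (Finset.sortedLT_sort _).pairwise hodd_l h3
    (hlen ▸ hk) hb hbk
  rw [hprod, hlen] at this
  linarith [hn.two_lt_prod_eulerRatio]

/-- If `n` is an odd perfect number with exactly 20 distinct prime factors, then its
smallest prime factor is at most 17, its second smallest prime factor is at most 61,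
and its third smallest prime factor is at most 1301. -/
theorem opn_twenty_factors_bounds (n : ℕ) (hn : Nat.Perfect n) (hodd : Odd n)
    (hω : n.primeFactors.card = 20) :
    n.minFac ≤ 17 ∧ (Finset.sort n.primeFactors (· ≤ ·))[1]! ≤ 61 ∧
      (Finset.sort n.primeFactors (· ≤ ·))[2]! ≤ 1301 := by
  have hbound (k b : ℕ) (hk : k < 20) (hb : 2 ≤ b)
      (h : oddEulerRatioProd 3 k * oddEulerRatioProd b (20 - k) ≤ 2) :
      (Finset.sort n.primeFactors (· ≤ ·))[k]! < b :=
    hn.sort_primeFactors_lt_of_oddEulerRatioProd_le hodd (hω ▸ hk) hb (hω ▸ h)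
  have hminFac : n.minFac ≤ (Finset.sort n.primeFactors (· ≤ ·))[0]! := by
    have hp : (Finset.sort n.primeFactors (· ≤ ·))[0]! ∈ n.primeFactors := by
      rw [getElem!_pos _ 0 (by rw [Finset.length_sort, hω]; norm_num)]
      exact (Finset.mem_sort _).mp (List.getElem_mem _)
    exact Nat.minFac_le_of_dvd (Nat.prime_of_mem_primeFactors hp).two_le
      (Nat.dvd_of_mem_primeFactors hp)
  refine ⟨hminFac.trans (Nat.le_of_lt_succ (hbound 0 18 (by norm_num) (by norm_num) ?_)),
    Nat.le_of_lt_succ (hbound 1 62 (by norm_num) (by norm_num) ?_),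
    Nat.le_of_lt_succ (hbound 2 1302 (by norm_num) (by norm_num) ?_)⟩ <;>
    norm_num [oddEulerRatioProd, eulerRatio]
end
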